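/- (Lemma 3.1) The set of vectors (x1, x2, x3, X11, X22, X33, X12, X13, X23) ∈ ℝ⁹ such that (x, X) ∈ QPB₃ and 4·x1 + 4·X11 − 4·X12 − 4·X13 + X23 = 0 has affine dimension exactly 5; that is, the direction of the affine span of this set is a linear subspace of ℝ⁹ of dimension 5. -/

import Mathlib

/-- The unit box in ℝ³. -/
def Box3 : Set (Fin 3 → ℝ) := {x | ∀ i, 0 ≤ x i ∧ x i ≤ 1}

/-- `QPB₃`: the convex hull of the rank-one lifted points of the unit box, in the space of
pairs `(x, X)` where `X` is a `3 × 3` real matrix. -/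
noncomputable def QPB3 : Set ((Fin 3 → ℝ) × Matrix (Fin 3) (Fin 3) ℝ) :=
  convexHull ℝ {p | ∃ x ∈ Box3, p = (x, Matrix.of fun i j => x i * x j)}

/-- The points of `QPB₃`, viewed as vectors
`(x1, x2, x3, X11, X22, X33, X12, X13, X23) ∈ ℝ⁹`, on which the constraint
`4·x1 + 4·X11 − 4·X12 − 4·X13 + X23 ≥ 0` is tight. -/
noncomputable def tightFace : Set (Fin 9 → ℝ) :=
  {v | ∃ p ∈ QPB3,
    v = ![p.1 0, p.1 1, p.1 2, p.2 0 0, p.2 1 1, p.2 2 2, p.2 0 1, p.2 0 2, p.2 1 2] ∧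
    4 * p.1 0 + 4 * p.2 0 0 - 4 * p.2 0 1 - 4 * p.2 0 2 + p.2 1 2 = 0}

/-!
On a lifted box point `(a, b, c)` the tightness functional `4x1 + 4X11 - 4X12 - 4X13 + X23` is the
quadratic `4a + 4a² - 4ab - 4ac + bc`, which is nonnegative on the box and vanishes only where
`a = 0, bc = 0` or at `(1/2, 1, 1)`. So the face is the convex hull of the lifts of these zeros.
They all satisfy `x1 = X12 = X13 = 2X11` and `X23 = 4X11`, which leaves a 5-dimensional space,
and six of them (`0` among them) are affinely independent.
-/

theorem convexHull_inter_ker_subset {𝕜 E : Type*} [Field 𝕜] [LinearOrder 𝕜]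
    [IsStrictOrderedRing 𝕜] [AddCommGroup E] [Module 𝕜 E] {s : Set E} (f : E →ₗ[𝕜] 𝕜)
    (hf : ∀ x ∈ s, 0 ≤ f x) :
    convexHull 𝕜 s ∩ {x | f x = 0} ⊆ convexHull 𝕜 (s ∩ {x | f x = 0}) := by
  rintro x ⟨hx, hfx⟩
  rw [convexHull_eq] at hx
  obtain ⟨ι, t, w, z, hw₀, hw₁, hz, rfl⟩ := hx
  rw [Finset.centerMass_eq_of_sum_1 _ _ hw₁, Set.mem_ofPred_eq, map_sum] at hfx
  simp only [map_smul, smul_eq_mul] at hfx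
  have hterm := (Finset.sum_eq_zero_iff_of_nonneg fun i hi =>
    mul_nonneg (hw₀ i hi) (hf _ (hz i hi))).1 hfx
  classical
  rw [← Finset.centerMass_filter_ne_zero]
  refine Finset.centerMass_mem_convexHull _ (fun i hi => hw₀ i (Finset.mem_filter.1 hi).1) ?_
    fun i hi => ?_
  · rw [Finset.sum_filter_ne_zero, hw₁]; exact one_pos
  · obtain ⟨hit, hwi⟩ := Finset.mem_filter.1 hi
    exact ⟨hz i hit, (mul_eq_zero.1 (hterm i hit)).resolve_left hwi⟩

theorem direction_affineSpan_eq_span_of_zero_mem {k V : Type*} [Ring k] [AddCommGroup V]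
    [Module k V] {s : Set V} (hs : (0 : V) ∈ s) :
    (affineSpan k s).direction = Submodule.span k s := by
  rw [direction_affineSpan, vectorSpan_eq_span_vsub_set_right k hs]
  simp

theorem quadratic_nonneg_on_box {a b c : ℝ} (ha : 0 ≤ a) (hb : 0 ≤ b) (hb1 : b ≤ 1)
    (hc : 0 ≤ c) (hc1 : c ≤ 1) : 0 ≤ 4 * a + 4 * (a * a) - 4 * (a * b) - 4 * (a * c) + b * c := by
  rcases le_or_gt (b + c) 1 with h | h
  · -- the quadratic is `4a(1 - b - c) + 4a² + bc`
    nlinarith [mul_nonneg hb hc, mul_nonneg ha (sub_nonneg.2 h)]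
  · -- the quadratic is `(2a - b - c + 1)² + (1 - b)(1 - c) + (b + c - 1)(2 - b - c)`
    nlinarith [sq_nonneg (2 * a - b - c + 1), mul_nonneg (sub_nonneg.2 hb1) (sub_nonneg.2 hc1),
      mul_nonneg (sub_nonneg.2 h.le) (by linarith : (0 : ℝ) ≤ 2 - b - c)]

theorem quadratic_eq_zero_on_box {a b c : ℝ} (ha : 0 ≤ a) (hb : 0 ≤ b) (hb1 : b ≤ 1)
    (hc : 0 ≤ c) (hc1 : c ≤ 1) (h : 4 * a + 4 * (a * a) - 4 * (a * b) - 4 * (a * c) + b * c = 0) :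
    a = 0 ∧ b * c = 0 ∨ a = 1 / 2 ∧ b = 1 ∧ c = 1 := by
  rcases le_or_gt (b + c) 1 with hbc | hbc
  · have hbc0 : 0 ≤ b * c := mul_nonneg hb hc
    have ha0 : a * a = 0 := by nlinarith [mul_nonneg ha (sub_nonneg.2 hbc)]
    exact Or.inl ⟨mul_self_eq_zero.1 ha0, by nlinarith [mul_nonneg ha (sub_nonneg.2 hbc)]⟩
  · have h1 : 0 ≤ (1 - b) * (1 - c) := mul_nonneg (by linarith) (by linarith)
    have h2 : 0 ≤ (b + c - 1) * (2 - b - c) := mul_nonneg (by linarith) (by linarith)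
    have hsq := sq_nonneg (2 * a - b - c + 1)
    have hb' : b = 1 := by nlinarith
    have hc' : c = 1 := by nlinarith
    subst hb' hc'
    have : (2 * a - 1) ^ 2 = 0 := by nlinarith
    exact Or.inr ⟨by linarith [pow_eq_zero_iff (n := 2) two_ne_zero |>.1 this], rfl, rfl⟩

def flatten : (Fin 3 → ℝ) × Matrix (Fin 3) (Fin 3) ℝ →ₗ[ℝ] Fin 9 → ℝ where
  toFun p := ![p.1 0, p.1 1, p.1 2, p.2 0 0, p.2 1 1, p.2 2 2, p.2 0 1, p.2 0 2, p.2 1 2]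
  map_add' p q := by ext k; fin_cases k <;> rfl
  map_smul' c p := by ext k; fin_cases k <;> rfl

def tightness : (Fin 9 → ℝ) →ₗ[ℝ] ℝ where
  toFun v := 4 * v 0 + 4 * v 3 - 4 * v 6 - 4 * v 7 + v 8
  map_add' v w := by simp only [Pi.add_apply]; ring
  map_smul' c v := by simp only [Pi.smul_apply, smul_eq_mul, RingHom.id_apply]; ring

def quadLift (x : Fin 3 → ℝ) : Fin 9 → ℝ :=
  flatten (x, Matrix.of fun i j => x i * x j)

theorem tightness_quadLift (x : Fin 3 → ℝ) :
    tightness (quadLift x) =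
      4 * x 0 + 4 * (x 0 * x 0) - 4 * (x 0 * x 1) - 4 * (x 0 * x 2) + x 1 * x 2 :=
  rfl

theorem tightFace_subset_convexHull :
    tightFace ⊆ convexHull ℝ (quadLift '' Box3) ∩ {v | tightness v = 0} := by
  rintro v ⟨p, hp, rfl, htight⟩
  refine ⟨?_, htight⟩
  have himage : flatten '' {p | ∃ x ∈ Box3, p = (x, Matrix.of fun i j => x i * x j)} =
      quadLift '' Box3 := by
    ext v
    simp only [Set.mem_image, Set.mem_ofPred_eq]
    constructor
    · rintro ⟨_, ⟨x, hx, rfl⟩, rfl⟩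
      exact ⟨x, hx, rfl⟩
    · rintro ⟨x, hx, rfl⟩
      exact ⟨_, ⟨x, hx, rfl⟩, rfl⟩
  rw [← himage, ← flatten.image_convexHull]
  exact Set.mem_image_of_mem flatten hp

theorem quadLift_mem_tightFace {x : Fin 3 → ℝ} (hx : x ∈ Box3) (h : tightness (quadLift x) = 0) :
    quadLift x ∈ tightFace :=
  ⟨_, subset_convexHull ℝ _ ⟨x, hx, rfl⟩, rfl, h⟩

theorem tightness_quadLift_nonneg {x : Fin 3 → ℝ} (hx : x ∈ Box3) : 0 ≤ tightness (quadLift x) :=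
  quadratic_nonneg_on_box (hx 0).1 (hx 1).1 (hx 1).2 (hx 2).1 (hx 2).2

-- `x2, x3, X22, X33` are free on the face, and `X11` determines `x1, X12, X13, X23`.
def faceGenerators : Fin 5 → Fin 9 → ℝ :=
  ![Pi.single 1 1, Pi.single 2 1, Pi.single 4 1, Pi.single 5 1, ![2, 0, 0, 1, 0, 0, 2, 2, 4]]

theorem quadLift_mem_span_faceGenerators {x : Fin 3 → ℝ} (hx : x ∈ Box3)
    (h : tightness (quadLift x) = 0) :
    quadLift x ∈ Submodule.span ℝ (Set.range faceGenerators) := by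
  have hrel : x 0 = 2 * (x 0 * x 0) ∧ x 0 * x 1 = 2 * (x 0 * x 0) ∧
      x 0 * x 2 = 2 * (x 0 * x 0) ∧ x 1 * x 2 = 4 * (x 0 * x 0) := by
    rcases quadratic_eq_zero_on_box (hx 0).1 (hx 1).1 (hx 1).2 (hx 2).1 (hx 2).2 h with
      ⟨h0, h12⟩ | ⟨h0, h1, h2⟩
    · simp [h0, h12]
    · rw [h0, h1, h2]; norm_num
  obtain ⟨r1, r2, r3, r4⟩ := hrel
  rw [Submodule.mem_span_range_iff_exists_fun]
  refine ⟨![x 1, x 2, x 1 * x 1, x 2 * x 2, x 0 * x 0], ?_⟩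
  ext k
  fin_cases k <;> simp [Fin.sum_univ_five, faceGenerators, quadLift, flatten] <;> linarith

theorem span_tightFace_le_span_faceGenerators :
    Submodule.span ℝ tightFace ≤ Submodule.span ℝ (Set.range faceGenerators) := by
  refine Submodule.span_le.2 (tightFace_subset_convexHull.trans ?_)
  refine (convexHull_inter_ker_subset tightness ?_).trans ?_
  · rintro _ ⟨x, hx, rfl⟩
    exact tightness_quadLift_nonneg hx
  refine convexHull_min ?_ (Submodule.convex _)
  rintro _ ⟨⟨x, hx, rfl⟩, h⟩
  exact quadLift_mem_span_faceGenerators hx h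

noncomputable def tightPoints : Fin 5 → Fin 3 → ℝ :=
  ![![0, 1, 0], ![0, 0, 1], ![0, 1 / 2, 0], ![0, 0, 1 / 2], ![1 / 2, 1, 1]]

theorem quadLift_tightPoints_mem_tightFace (i : Fin 5) : quadLift (tightPoints i) ∈ tightFace := by
  refine quadLift_mem_tightFace (fun j => ?_) ?_ <;>
    fin_cases i <;> (try fin_cases j) <;>
      norm_num [tightPoints, tightness_quadLift, Matrix.cons_val_two]

theorem zero_mem_tightFace : (0 : Fin 9 → ℝ) ∈ tightFace := by
  have h0 : quadLift 0 = 0 := by ext k; fin_cases k <;> simp [quadLift, flatten]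
  rw [← h0]
  exact quadLift_mem_tightFace (fun _ => ⟨le_rfl, zero_le_one⟩) (by simp [tightness_quadLift])

theorem linearIndependent_quadLift_tightPoints : LinearIndependent ℝ (quadLift ∘ tightPoints) := by
  rw [Fintype.linearIndependent_iff]
  intro g hg
  have e1 := congrFun hg 1
  have e2 := congrFun hg 2
  have e3 := congrFun hg 3
  have e4 := congrFun hg 4
  have e5 := congrFun hg 5
  simp only [tightPoints, Function.comp_apply, quadLift, flatten, LinearMap.coe_mk, AddHom.coe_mk,
    Matrix.cons_val', Matrix.cons_val_fin_one, Matrix.cons_val_zero, Matrix.cons_val_one,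
    Matrix.cons_val, Matrix.of_apply, Finset.sum_apply, Pi.smul_apply, smul_eq_mul,
    Fin.sum_univ_five, Pi.zero_apply] at e1 e2 e3 e4 e5
  intro i
  fin_cases i <;> dsimp <;> linarith

/-- The face of `QPB₃` on which the constraint is tight has affine dimension exactly 5. -/
theorem tightFace_dim :
    Module.finrank ℝ (affineSpan ℝ tightFace).direction = 5 := by
  rw [direction_affineSpan_eq_span_of_zero_mem zero_mem_tightFace]
  refine le_antisymm ?_ ?_
  · calc Module.finrank ℝ (Submodule.span ℝ tightFace)
        ≤ Module.finrank ℝ (Submodule.span ℝ (Set.range faceGenerators)) :=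
          Submodule.finrank_mono span_tightFace_le_span_faceGenerators
      _ ≤ 5 := by simpa [Set.finrank] using finrank_range_le_card (R := ℝ) faceGenerators
  · calc 5 = Module.finrank ℝ (Submodule.span ℝ (Set.range (quadLift ∘ tightPoints))) := by
          rw [finrank_span_eq_card linearIndependent_quadLift_tightPoints, Fintype.card_fin]
      _ ≤ Module.finrank ℝ (Submodule.span ℝ tightFace) :=
          Submodule.finrank_mono (Submodule.span_mono
            (Set.range_subset_iff.2 quadLift_tightPoints_mem_tightFace))
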